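/- arXiv:math-ph/0207031 — 2 statements merged into one kernel-verified Lean document; each statement's English description precedes it below -/
import Mathlib

section
/- Suppose \varrho satisfies the Pearson equation (\varrho B)' = \varrho A on (a, b) for polynomials A of degree \le 1 and B of degree \le 2. Then \varrho^{(k)} := \varrho B^k satisfies the Pearson equation (\varrho^{(k)} B)' = \varrho^{(k)} A^{(k)} on (a, b), where A^{(k)} = A + k B'. -/
open Polynomial Set

theorem pearson_equation_for_derivative_weights
    (a b : ℝ) (A B : Polynomial ℝ) (hA : A.degree ≤ 1) (hB : B.degree ≤ 2)
    (ρ : ℝ → ℝ) (hρdiff : ∀ ω ∈ Set.Ioo a b, DifferentiableAt ℝ ρ ω)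
    (hρpos : ∀ ω ∈ Set.Ioo a b, 0 < ρ ω)
    (hPearson : ∀ ω ∈ Set.Ioo a b,
      HasDerivAt (fun x : ℝ => ρ x * B.eval x) (ρ ω * A.eval ω) ω)
    (k : ℕ) :
    ∀ ω ∈ Set.Ioo a b,
      HasDerivAt (fun x : ℝ => (ρ x * (B.eval x) ^ k) * B.eval x)
        ((ρ ω * (B.eval ω) ^ k) *
          (A.eval ω + (k : ℝ) * B.derivative.eval ω)) ω := by
  intro ω hω
  have hρ := (hρdiff ω hω).hasDerivAt
  have hBd := B.hasDerivAt ω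
  have h1 : HasDerivAt (fun x : ℝ => ρ x * B.eval x)
      (deriv ρ ω * B.eval ω + ρ ω * B.derivative.eval ω) ω := hρ.mul hBd
  have heq : deriv ρ ω * B.eval ω + ρ ω * B.derivative.eval ω = ρ ω * A.eval ω :=
    h1.unique (hPearson ω hω)
  have h2 : HasDerivAt (fun x : ℝ => ρ x * (B.eval x) ^ (k + 1))
      (deriv ρ ω * (B.eval ω) ^ (k + 1) +
        ρ ω * ((k + 1 : ℕ) * (B.eval ω) ^ k * B.derivative.eval ω)) ω :=
    hρ.mul (hBd.pow (k + 1))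
  have hfun : (fun x : ℝ => (ρ x * (B.eval x) ^ k) * B.eval x)
      = fun x : ℝ => ρ x * (B.eval x) ^ (k + 1) := by
    funext x; ring
  rw [hfun]
  convert h2 using 1
  push_cast
  linear_combination (-(B.eval ω ^ k)) * heq
end

section
/- Let \varrho satisfy the Pearson equation (\varrho B)' = \varrho A on (a, b) with deg A \le 1, deg B \le 2, and define P_n(\omega) = c_n \varrho(\omega)^{-1} d^n/d\omega^n (\varrho(\omega) B(\omega)^n) (Rodrigues formula). Then each P_n is a polynomial of degree at most n and satisfies the differential equation A(\omega) P_n'(\omega) + B(\omega) P_n''(\omega) = \lambda_n P_n(\omega), where \lambda_n = a_1 n + b_2 n(n-1), A(\omega) = a_1\omega + a_0, B(\omega) = b_2\omega^2 + b_1\omega + b_0. -/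
open Polynomial Set MeasureTheory

noncomputable def rodS (A B : Polynomial ℝ) (j : ℝ) (q : Polynomial ℝ) : Polynomial ℝ :=
  B * q.derivative + (A + Polynomial.C j * B.derivative) * q

noncomputable def rodT (A B : Polynomial ℝ) : ℝ → ℕ → Polynomial ℝ
  | _, 0 => 1
  | j, (k+1) => rodS A B j (rodT A B (j+1) k)

noncomputable def rodμ (A B : Polynomial ℝ) (j : ℝ) : ℝ :=
  A.coeff 1 * j + B.coeff 2 * j * (j - 1)

lemma derivA_eq (A : Polynomial ℝ) (hA : A.degree ≤ 1) :
    A.derivative = C (A.coeff 1) := by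
  conv_lhs => rw [Polynomial.eq_X_add_C_of_degree_le_one hA]
  simp

lemma derivB2_eq (B : Polynomial ℝ) (hB : B.degree ≤ 2) :
    B.derivative.derivative = C (2 * B.coeff 2) := by
  ext k
  rw [coeff_derivative, coeff_derivative]
  cases k with
  | zero => simp [coeff_C]; ring
  | succ m =>
      have h : B.degree < ((m + 1 + 1 + 1 : ℕ) : WithBot ℕ) :=
        lt_of_le_of_lt hB (by exact_mod_cast (by omega : 2 < m + 1 + 1 + 1))
      have h0 : B.coeff (m + 1 + 1 + 1) = 0 := coeff_eq_zero_of_degree_lt h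
      simp [coeff_C, h0]

lemma rod_comm (A B : Polynomial ℝ) (hA' : A.derivative = C (A.coeff 1))
    (hB'' : B.derivative.derivative = C (2 * B.coeff 2)) (j : ℝ) (q : Polynomial ℝ) :
    B * (rodS A B j q).derivative.derivative
      + (A + C j * B.derivative) * (rodS A B j q).derivative
      + C (rodμ A B j) * rodS A B j q
    = rodS A B j (B * q.derivative.derivative + (A + C (j + 1) * B.derivative) * q.derivative
        + C (rodμ A B (j + 1)) * q) := by
  have hμ : rodμ A B (j + 1) = rodμ A B j + A.coeff 1 + 2 * j * B.coeff 2 := by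
    simp only [rodμ]; ring
  simp only [rodS, derivative_mul, derivative_add, hA', hB'', derivative_C, hμ, C_add, C_mul,
    C_1, map_ofNat, derivative_one, derivative_ofNat, derivative_zero, map_zero]
  ring

lemma rod_eigen (A B : Polynomial ℝ) (hA' : A.derivative = C (A.coeff 1))
    (hB'' : B.derivative.derivative = C (2 * B.coeff 2)) :
    ∀ (k : ℕ) (j : ℝ),
    B * (rodT A B j k).derivative.derivative + (A + C j * B.derivative) * (rodT A B j k).derivative
      + C (rodμ A B j) * rodT A B j k = C (rodμ A B (j + k)) * rodT A B j k := by
  intro k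
  induction k with
  | zero => intro j; simp [rodT]
  | succ k ih =>
      intro j
      have h1 : rodT A B j (k+1) = rodS A B j (rodT A B (j+1) k) := rfl
      rw [h1, rod_comm A B hA' hB'' j _, ih (j+1)]
      have harg : j + 1 + (k : ℝ) = j + ((k : ℕ) + 1 : ℕ) := by push_cast; ring
      rw [harg]
      simp only [rodS, derivative_mul, derivative_C]
      ring

lemma rod_deg (A B : Polynomial ℝ) (hA : A.natDegree ≤ 1) (hB : B.natDegree ≤ 2) :
    ∀ (k : ℕ) (j : ℝ), (rodT A B j k).natDegree ≤ k := by
  have hβ : B.derivative.natDegree ≤ 1 :=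
    le_trans (natDegree_derivative_le B) (by omega)
  have hlin : ∀ j : ℝ, (A + C j * B.derivative).natDegree ≤ 1 := by
    intro j
    refine le_trans (natDegree_add_le _ _) (max_le hA ?_)
    refine le_trans (natDegree_mul_le) ?_
    simp [hβ, hB]
  intro k
  induction k with
  | zero => intro j; simp [rodT]
  | succ k ih =>
      intro j
      have h1 : rodT A B j (k+1) = rodS A B j (rodT A B (j+1) k) := rfl
      rw [h1, rodS]
      refine le_trans (natDegree_add_le _ _) (max_le ?_ ?_)
      · rcases Nat.eq_zero_or_pos k with hk | hk
        · subst hk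
          simp [rodT]
        · refine le_trans (natDegree_mul_le) ?_
          have := natDegree_derivative_le (rodT A B (j+1) k)
          have h2 := ih (j+1)
          omega
      · refine le_trans (natDegree_mul_le) ?_
        have := hlin j
        have h2 := ih (j+1)
        omega

theorem rodrigues_formula_polynomial_eigenfunction
    (a b : ℝ) (hab : a < b) (A B : Polynomial ℝ) (hA : A.degree ≤ 1) (hB : B.degree ≤ 2)
    (ρ : ℝ → ℝ) (hρ : ContDiffOn ℝ (⊤ : ℕ∞) ρ (Set.Ioo a b))
    (hρpos : ∀ ω ∈ Set.Ioo a b, 0 < ρ ω)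
    (hPearson : ∀ ω ∈ Set.Ioo a b,
      HasDerivAt (fun x : ℝ => ρ x * B.eval x) (ρ ω * A.eval ω) ω)
    (n : ℕ) (c : ℝ) (hc : c ≠ 0) :
    ∃ p : Polynomial ℝ, p.degree ≤ n ∧
      (∀ ω ∈ Set.Ioo a b,
        p.eval ω = c * (ρ ω)⁻¹ *
          iteratedDerivWithin n (fun x : ℝ => ρ x * (B.eval x) ^ n) (Set.Ioo a b) ω) ∧
      ∀ ω : ℝ,
        A.eval ω * p.derivative.eval ω + B.eval ω * p.derivative.derivative.eval ω
          = (A.coeff 1 * n + B.coeff 2 * n * (n - 1)) * p.eval ω := by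
  have hA' := derivA_eq A hA
  have hB'' := derivB2_eq B hB
  set s := Set.Ioo a b with hs_def
  have hs : IsOpen s := isOpen_Ioo
  set f : ℝ → ℝ := fun x => ρ x * (B.eval x) ^ n with hf_def
  -- analytic key lemma
  have key : ∀ k, k ≤ n → ∀ ω ∈ s,
      iteratedDerivWithin k f s ω
        = ρ ω * (B ^ (n - k) * rodT A B ((n : ℝ) - k) k).eval ω := by
    intro k
    induction k with
    | zero =>
        intro _ ω hω
        simp [rodT, f, eval_pow]
    | succ k ih =>
        intro hkn ω hω
        have hk : k ≤ n := by omega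
        have hk1 : k + 1 ≤ n := hkn
        rw [iteratedDerivWithin_succ,
          derivWithin_of_isOpen hs hω]
        set T := rodT A B ((n : ℝ) - k) k with hT
        have hEq : iteratedDerivWithin k f s =ᶠ[nhds ω]
            (fun x => (ρ x * B.eval x) * (B ^ (n - (k+1)) * T).eval x) := by
          filter_upwards [hs.mem_nhds hω] with x hx
          rw [ih hk x hx]
          have hpow : B ^ (n - k) = B * B ^ (n - (k+1)) := by
            rw [← pow_succ']
            congr 1
            omega
          simp [hpow, eval_mul]
          ring
        rw [hEq.deriv_eq]
        have hd : HasDerivAt (fun x => (ρ x * B.eval x) * (B ^ (n - (k+1)) * T).eval x)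
            (ρ ω * A.eval ω * (B ^ (n - (k+1)) * T).eval ω
              + (ρ ω * B.eval ω) * ((B ^ (n - (k+1)) * T).derivative.eval ω)) ω :=
          (hPearson ω hω).mul ((B ^ (n - (k+1)) * T).hasDerivAt ω)
        rw [hd.deriv]
        -- polynomial identity
        have hm : ((n - (k+1) : ℕ) : ℝ) = (n : ℝ) - (k + 1) := by
          push_cast [Nat.cast_sub hk1]
          ring
        have hTrec : rodT A B ((n : ℝ) - (k+1)) (k+1)
            = rodS A B ((n : ℝ) - (k+1)) T := by
          show rodS A B _ (rodT A B ((n : ℝ) - (k+1) + 1) k) = _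
          have : (n : ℝ) - (k+1) + 1 = (n : ℝ) - k := by ring
          rw [this]
        have hpoly : A * (B ^ (n - (k+1)) * T) + B * (B ^ (n - (k+1)) * T).derivative
            = B ^ (n - (k+1)) * rodT A B ((n : ℝ) - (k+1)) (k+1) := by
          rw [hTrec, rodS, ← hm]
          rcases Nat.eq_zero_or_pos (n - (k+1)) with h0 | h0
          · rw [h0]
            simp
            ring
          · obtain ⟨m, hm'⟩ := Nat.exists_eq_add_of_le h0
            rw [hm']
            simp only [derivative_mul, derivative_pow, Nat.add_sub_cancel_left,
              Nat.cast_add, Nat.cast_one]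
            push_cast
            ring
        calc ρ ω * A.eval ω * (B ^ (n - (k+1)) * T).eval ω
              + (ρ ω * B.eval ω) * ((B ^ (n - (k+1)) * T).derivative.eval ω)
            = ρ ω * ((A * (B ^ (n - (k+1)) * T)
                + B * (B ^ (n - (k+1)) * T).derivative).eval ω) := by
              simp [eval_mul, eval_add]; ring
          _ = ρ ω * (B ^ (n - (k+1)) * rodT A B ((n : ℝ) - (k+1)) (k+1)).eval ω := by
              rw [hpoly]
          _ = ρ ω * (B ^ (n - (k+1)) * rodT A B ((n : ℝ) - (k+1 : ℕ)) (k+1)).eval ω := by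
              norm_num
  -- build p
  refine ⟨C c * rodT A B 0 n, ?_, ?_, ?_⟩
  · have hdeg : (C c * rodT A B 0 n).natDegree ≤ n := by
      refine le_trans (natDegree_mul_le) ?_
      have h1 : A.natDegree ≤ 1 := natDegree_le_iff_degree_le.mpr hA
      have h2 : B.natDegree ≤ 2 := natDegree_le_iff_degree_le.mpr hB
      have := rod_deg A B h1 h2 n 0
      simp [natDegree_C]
      exact this
    exact natDegree_le_iff_degree_le.mp hdeg
  · intro ω hω
    rw [key n le_rfl ω hω]
    have hρ0 : ρ ω ≠ 0 := (hρpos ω hω).ne'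
    have hnn : ((n : ℝ) - (n : ℕ)) = 0 := by ring
    simp [Nat.sub_self, hnn, eval_mul]
    field_simp
  · intro ω
    have heig := rod_eigen A B hA' hB'' n 0
    have h0 : rodμ A B 0 = 0 := by simp [rodμ]
    have hμn : rodμ A B ((n : ℕ) : ℝ) = A.coeff 1 * n + B.coeff 2 * n * ((n : ℝ) - 1) := by
      simp [rodμ]
    rw [h0] at heig
    have h := congrArg (fun q => (C c * q).eval ω) heig
    simp only [eval_mul, eval_add, eval_C, map_zero, zero_mul, add_zero] at h
    simp only [derivative_mul, derivative_C, zero_mul, zero_add, eval_mul, eval_C, hμn] at h ⊢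
    linear_combination h
end
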